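/- arXiv:1512.09193 — 2 statements merged into one kernel-verified Lean document; each statement's English description precedes it below -/
import Mathlib

section
/- The contour integral (1/(2πi)) ∮_{|w|=1} dw / (w(z - (pw + q/w))) equals 1/√(z² - 4pq) for real z > p + q = 1 with p, q > 0. -/
/-!
The integrand is `-1 / (p (w - a) (w - b))`, where `a, b` are the roots of `p w² - z w + q`.
Since this quadratic is positive at `0` and equals `1 - z < 0` at `1`, exactly one root `a`
lies in the unit disc, so by Cauchy's formula applied to `w ↦ (w - b)⁻¹` the integral is
`2πi / (p (b - a))`, and `p (b - a)` is the square root of the discriminant `z² - 4pq`.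
-/

open Complex Metric Set

theorem circleIntegral_inv_sub_mul_sub {c a b : ℂ} {R : ℝ} (ha : a ∈ ball c R)
    (hb : b ∉ closedBall c R) :
    (∮ w in C(c, R), ((w - a) * (w - b))⁻¹) = 2 * Real.pi * I * (a - b)⁻¹ := by
  have hd : DifferentiableOn ℂ (fun w => (w - b)⁻¹) (closedBall c R) := fun w hw =>
    ((differentiableAt_id.sub_const b).inv
      (sub_ne_zero.mpr fun h => hb (h ▸ hw))).differentiableWithinAt
  simpa only [mul_inv, smul_eq_mul] using hd.circleIntegral_sub_inv_smul ha

theorem one_div_mul_sub_eq_of_vieta {p q z a b w : ℂ} (hsum : p * (a + b) = z)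
    (hprod : p * (a * b) = q) (hw : w ≠ 0) :
    1 / (w * (z - (p * w + q / w))) = -p⁻¹ * ((w - a) * (w - b))⁻¹ := by
  have hfactor : w * (z - (p * w + q / w)) = -(p * ((w - a) * (w - b))) := by
    field_simp
    linear_combination (-w) * hsum + hprod
  rw [hfactor, one_div, inv_neg, mul_inv, neg_mul]

theorem exists_quadratic_roots_lt_one_lt {p q z : ℝ} (hp : 0 < p) (hq : 0 < q)
    (hz : p + q < z) :
    ∃ a b : ℝ, 0 < a ∧ a < 1 ∧ 1 < b ∧ p * (a + b) = z ∧ p * (a * b) = q ∧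
      p * (b - a) = Real.sqrt (z ^ 2 - 4 * p * q) := by
  have hΔ : 0 ≤ z ^ 2 - 4 * p * q := by nlinarith [sq_nonneg (p - q)]
  set s := Real.sqrt (z ^ 2 - 4 * p * q)
  have hs : s ^ 2 = z ^ 2 - 4 * p * q := Real.sq_sqrt hΔ
  have hs0 : 0 ≤ s := Real.sqrt_nonneg _
  -- unfolds to `p (p + q - z) < 0`; it places `2p` strictly between `z - s` and `z + s`
  have hsep : (z - 2 * p) ^ 2 < s ^ 2 := by nlinarith
  have hsz : s < z := by nlinarith
  refine ⟨(z - s) / (2 * p), (z + s) / (2 * p), div_pos (by linarith) (by linarith), ?_, ?_,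
    ?_, ?_, ?_⟩
  · rw [div_lt_one (by linarith)]; nlinarith
  · rw [lt_div_iff₀ (by linarith)]; nlinarith
  · field_simp; ring
  · field_simp; nlinarith
  · field_simp; ring

/-- The contour integral `(1/(2πi)) ∮_{|w|=1} dw / (w (z - (pw + q/w)))` over the
positively oriented unit circle equals `1/√(z² - 4pq)` for real `z > p + q = 1`,
`p, q > 0`. -/
theorem contour_integral_return_gf (p q : ℝ) (hp : 0 < p) (hq : 0 < q) (hpq : p + q = 1)
    (z : ℝ) (hz : 1 < z) :
    (2 * Real.pi * Complex.I)⁻¹ *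
        (∮ w in C(0, 1), 1 / (w * ((z : ℂ) - ((p : ℂ) * w + (q : ℂ) / w))))
      = (1 / Real.sqrt (z ^ 2 - 4 * p * q) : ℝ) := by
  obtain ⟨a, b, ha0, ha1, hb1, hsum, hprod, hgap⟩ :=
    exists_quadratic_roots_lt_one_lt hp hq (hpq ▸ hz : p + q < z)
  have ha : (a : ℂ) ∈ ball (0 : ℂ) 1 := by simpa [abs_of_pos ha0] using ha1
  have hb : (b : ℂ) ∉ closedBall (0 : ℂ) 1 := by simpa [abs_of_pos (one_pos.trans hb1)] using hb1
  have hintegrand : EqOn (fun w : ℂ => 1 / (w * ((z : ℂ) - ((p : ℂ) * w + (q : ℂ) / w))))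
      (fun w => -(p : ℂ)⁻¹ * ((w - a) * (w - b))⁻¹) (sphere (0 : ℂ) 1) := fun w hw =>
    one_div_mul_sub_eq_of_vieta (by exact_mod_cast hsum) (by exact_mod_cast hprod)
      (ne_zero_of_mem_unit_sphere ⟨w, hw⟩)
  have hp0 : (p : ℂ) ≠ 0 := by exact_mod_cast hp.ne'
  have hab : (a : ℂ) - b ≠ 0 := sub_ne_zero.mpr (by exact_mod_cast (ha1.trans hb1).ne)
  rw [circleIntegral.integral_congr zero_le_one hintegrand, circleIntegral.integral_const_mul,
    circleIntegral_inv_sub_mul_sub ha hb, ← hgap]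
  push_cast
  rw [← neg_sub (a : ℂ) b]
  field_simp
end

section
/- Let X be a real random variable with moment generating function m_X(t) = E[e^{tX}] finite for all t ≥ 0, and let I(x) = sup_{t>0} (tx - log m_X(t)). Then for i.i.d. copies X_1,…,X_n of X and any x > E[X], P((1/n) Σ_{k=1}^n X_k ≥ x) ≤ e^{-n I(x)}. -/
open MeasureTheory ProbabilityTheory Real

namespace ProbabilityTheory

variable {Ω Ω' : Type*} [MeasurableSpace Ω] [MeasurableSpace Ω'] {μ : Measure Ω} {μ' : Measure Ω'}
  {X : ℕ → Ω → ℝ} {Y : Ω' → ℝ}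

theorem iIndepFun.cgf_sum_range_of_identDistrib (h_indep : iIndepFun X μ)
    (h_meas : ∀ i, Measurable (X i)) (hident : ∀ i, IdentDistrib (X i) Y μ μ') (n : ℕ) (t : ℝ) :
    cgf (∑ k ∈ Finset.range n, X k) μ t = n * cgf Y μ' t := by
  have hmgf : ∀ i ∈ Finset.range n, mgf (X i) μ t = mgf Y μ' t :=
    fun i _ => congrFun (mgf_congr_identDistrib (hident i)) t
  rw [cgf, h_indep.mgf_sum h_meas, Finset.prod_congr rfl hmgf, Finset.prod_const,
    Finset.card_range, log_pow, cgf]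

theorem iIndepFun.measure_sum_range_ge_le_exp_cgf (h_indep : iIndepFun X μ)
    (h_meas : ∀ i, Measurable (X i)) (hident : ∀ i, IdentDistrib (X i) Y μ μ')
    {t : ℝ} (ht : 0 ≤ t) (h_int : Integrable (fun ω => exp (t * Y ω)) μ') (n : ℕ) (a : ℝ) :
    μ.real {ω | a ≤ (∑ k ∈ Finset.range n, X k) ω} ≤ exp (-t * a + n * cgf Y μ' t) := by
  have : IsProbabilityMeasure μ := h_indep.isProbabilityMeasure
  have h_int_sum : Integrable (fun ω => exp (t * (∑ k ∈ Finset.range n, X k) ω)) μ :=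
    h_indep.integrable_exp_mul_sum h_meas fun i _ =>
      ((hident i).comp (measurable_const_mul t).exp).integrable_iff.mpr h_int
  rw [← h_indep.cgf_sum_range_of_identDistrib h_meas hident]
  exact measure_ge_le_exp_cgf a ht h_int_sum

end ProbabilityTheory

/-- `hp₁` covers the junk value `⨆ i, g i = 0` when `g` is unbounded above or `ι` is empty. -/
theorem le_exp_neg_iSup {ι : Type*} {p : ℝ} {g : ι → ℝ} (hp₀ : 0 ≤ p) (hp₁ : p ≤ 1)
    (h : ∀ i, p ≤ exp (-g i)) : p ≤ exp (-⨆ i, g i) := by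
  rcases hp₀.eq_or_lt with rfl | hp
  · positivity
  rw [← log_le_iff_le_exp hp, le_neg]
  exact Real.iSup_le (fun i => le_neg.mp ((log_le_iff_le_exp hp).mpr (h i)))
    (neg_nonneg.mpr (log_nonpos hp₀ hp₁))

theorem cramer_chernoff_upper_bound_general {Ω : Type*} [MeasurableSpace Ω]
    (μ : Measure Ω) [IsProbabilityMeasure μ]
    (X : ℕ → Ω → ℝ) (hmeas : ∀ i, Measurable (X i))
    (hindep : iIndepFun X μ)
    (hident : ∀ i, IdentDistrib (X i) (X 0) μ μ)
    (hmgf : ∀ t : ℝ, 0 ≤ t → Integrable (fun ω => Real.exp (t * X 0 ω)) μ)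
    (I : ℝ → ℝ)
    (hI : ∀ x : ℝ, I x = ⨆ t : Set.Ioi (0 : ℝ), ((t : ℝ) * x - Real.log (mgf (X 0) μ t)))
    (x : ℝ) (n : ℕ) (hn : 0 < n) :
    (μ {ω | x ≤ (∑ k ∈ Finset.range n, X k ω) / n}).toReal ≤ Real.exp (-(n : ℝ) * I x) := by
  have hn' : (0 : ℝ) < n := by exact_mod_cast hn
  have hevent : {ω | x ≤ (∑ k ∈ Finset.range n, X k ω) / n}
      = {ω | n * x ≤ (∑ k ∈ Finset.range n, X k) ω} := by
    ext ω
    rw [Set.mem_ofPred_eq, Set.mem_ofPred_eq, Finset.sum_apply, le_div_iff₀ hn', mul_comm]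
  rw [← measureReal_def, hevent, hI, neg_mul, Real.mul_iSup_of_nonneg hn'.le]
  refine le_exp_neg_iSup measureReal_nonneg measureReal_le_one fun t => ?_
  calc μ.real {ω | n * x ≤ (∑ k ∈ Finset.range n, X k) ω}
      ≤ exp (-t * (n * x) + n * cgf (X 0) μ t) :=
        hindep.measure_sum_range_ge_le_exp_cgf hmeas hident t.2.le (hmgf t t.2.le) n _
    _ = exp (-(n * (t * x - log (mgf (X 0) μ t)))) := by rw [cgf]; ring_nf

/-- Chernoff/Cramér upper bound: for i.i.d. real random variables with everywhere-finite
moment generating function (for `t ≥ 0`), and `I(x) = sup_{t>0} (tx - log m_X(t))`,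
the probability that the sample mean exceeds `x > E[X]` is at most `e^{-n I(x)}`. -/
theorem cramer_chernoff_upper_bound {Ω : Type*} [MeasurableSpace Ω]
    (μ : Measure Ω) [IsProbabilityMeasure μ]
    (X : ℕ → Ω → ℝ) (hmeas : ∀ i, Measurable (X i))
    (hindep : iIndepFun X μ)
    (hident : ∀ i, IdentDistrib (X i) (X 0) μ μ)
    (hmgf : ∀ t : ℝ, 0 ≤ t → Integrable (fun ω => Real.exp (t * X 0 ω)) μ)
    (I : ℝ → ℝ)
    (hI : ∀ x : ℝ, I x = ⨆ t : Set.Ioi (0 : ℝ), ((t : ℝ) * x - Real.log (mgf (X 0) μ t)))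
    (x : ℝ) (hx : μ[X 0] < x) (n : ℕ) (hn : 0 < n) :
    (μ {ω | x ≤ (∑ k ∈ Finset.range n, X k ω) / n}).toReal ≤ Real.exp (-(n : ℝ) * I x) :=
  cramer_chernoff_upper_bound_general μ X hmeas hindep hident hmgf I hI x n hn
end
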